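/- For all integers d, t ≥ 1 there exists a constant C = C(d,t) > 0 with the following property. Let 0 < ε ≤ 1, let L be a positive integer with L > C/ε, and let 𝓠 ⊆ [L]^t with |𝓠| ≥ ε·L^t. Let s := |𝓘|. Then there exists a positive integer Q̃ ≤ C·L^C such that for every i⃗ ∈ 𝓘 there exist q⃗₁,…,q⃗ₛ ∈ 𝓠 and integers γ₁,…,γₛ with |γₘ| ≤ C·L^C for all m, satisfying Σ_{m=1}^{s} γₘ·q⃗ₘ^{j⃗} = Q̃ if j⃗ = i⃗ and Σ_{m=1}^{s} γₘ·q⃗ₘ^{j⃗} = 0 if j⃗ ≠ i⃗, for every j⃗ ∈ 𝓘. -/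

import Mathlib

open MvPolynomial Finset

/-- The set `𝓘` of multi-indices `i : Fin t → ℕ` of total degree at most `d`. -/
def mIdx (t d : ℕ) : Finset (Fin t → ℕ) :=
  (Finset.Icc 0 (fun _ => d)).filter (fun i => ∑ j, i j ≤ d)

lemma sz (d : ℕ) : ∀ (t : ℕ) (S : Finset ℚ) (P : MvPolynomial (Fin t) ℚ), P ≠ 0 →
    P.totalDegree ≤ d →
    ((Fintype.piFinset fun _ : Fin t => S).filter
      (fun x => MvPolynomial.eval x P = 0)).card ≤ d * t * S.card ^ (t - 1) := by
  intro t
  induction t with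
  | zero =>
    intro S P hP hdeg
    have : ∀ x ∈ Fintype.piFinset fun _ : Fin 0 => S, MvPolynomial.eval x P ≠ 0 := by
      intro x _
      have hC : P = C (P.coeff 0) := (P.eq_C_of_isEmpty)
      rw [hC]
      simp only [eval_C]
      intro h
      apply hP
      rw [hC, h, map_zero]
    rw [Finset.filter_false_of_mem this]
    simp
  | succ t ih =>
    intro S P hP hdeg
    classical
    set p := finSuccEquiv ℚ t P with hp
    have hpne : p ≠ 0 := fun h => hP ((finSuccEquiv ℚ t).injective (by simp [← hp, h]))
    set k := p.natDegree with hk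
    set Pk := p.coeff k with hPk
    have hPkne : Pk ≠ 0 := Polynomial.leadingCoeff_ne_zero.2 hpne
    have hPkdeg : Pk.totalDegree ≤ d :=
      le_trans (le_trans (Nat.le_add_right _ k)
        (totalDegree_coeff_finSuccEquiv_add_le P k hPkne)) hdeg
    have hkd : k ≤ d := by
      rw [hk, hp, natDegree_finSuccEquiv]
      exact le_trans (degreeOf_le_totalDegree P 0) hdeg
    set G := Fintype.piFinset fun _ : Fin (t+1) => S with hG
    set Gt := Fintype.piFinset fun _ : Fin t => S with hGt
    set Z := G.filter (fun x => MvPolynomial.eval x P = 0) with hZ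
    set ZA := Z.filter (fun x => MvPolynomial.eval (Fin.tail x) Pk = 0) with hZA
    set ZB := Z.filter (fun x => ¬ MvPolynomial.eval (Fin.tail x) Pk = 0) with hZB
    have hsplit : ZA.card + ZB.card = Z.card := Finset.card_filter_add_card_filter_not _
    have htail : ∀ x ∈ Z, Fin.tail x ∈ Gt := by
      intro x hx
      have hxG : x ∈ G := Finset.mem_filter.1 hx |>.1
      rw [Fintype.mem_piFinset] at hxG ⊢
      intro j; exact hxG j.succ
    have hcons : ∀ x : Fin (t+1) → ℚ, Fin.cons (x 0) (Fin.tail x) = x := fun x =>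
      Fin.cons_self_tail x
    -- bound ZA
    have hZAcard : ZA.card ≤ S.card * (d * t * S.card ^ (t - 1)) := by
      have hmaps : ∀ x ∈ ZA, (fun x : Fin (t+1) → ℚ => ((x 0 : ℚ), Fin.tail x)) x ∈
          S ×ˢ (Gt.filter (fun s => MvPolynomial.eval s Pk = 0)) := by
        intro x hx
        have hxZ : x ∈ Z := Finset.mem_filter.1 hx |>.1
        have hxG : x ∈ G := Finset.mem_filter.1 hxZ |>.1
        rw [Finset.mem_product]
        refine ⟨?_, Finset.mem_filter.2 ⟨htail x hxZ, (Finset.mem_filter.1 hx).2⟩⟩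
        exact Fintype.mem_piFinset.1 hxG 0
      have hinjA : Set.InjOn (fun x : Fin (t+1) → ℚ => ((x 0 : ℚ), Fin.tail x))
          (ZA : Set (Fin (t+1) → ℚ)) := by
        intro x _ y _ hxy
        simp only [Prod.mk.injEq] at hxy
        obtain ⟨h1, h2⟩ := hxy
        rw [← hcons x, ← hcons y, h1, h2]
      have := Finset.card_le_card_of_injOn _ hmaps hinjA
      refine le_trans this ?_
      rw [Finset.card_product]
      exact Nat.mul_le_mul_left _ (ih S Pk hPkne hPkdeg)
    -- bound ZB
    have hZBcard : ZB.card ≤ d * Gt.card := by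
      refine Finset.card_le_mul_card_image_of_maps_to
        (f := fun x => Fin.tail x)
        (fun x hx => htail x (Finset.mem_filter.1 hx |>.1)) d ?_
      intro s hs
      by_cases hsPk : MvPolynomial.eval s Pk = 0
      · have : (ZB.filter fun x => Fin.tail x = s) = ∅ := by
          rw [Finset.filter_eq_empty_iff]
          intro x hx h
          exact (Finset.mem_filter.1 hx).2 (h ▸ hsPk)
        exact (Finset.card_eq_zero.2 (by convert this)).le.trans (Nat.zero_le d)
      · set q := p.map (MvPolynomial.eval s) with hq
        have hqne : q ≠ 0 := fun h => hsPk (by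
          have := congrArg (fun r => Polynomial.coeff r k) h
          simpa [hq, Polynomial.coeff_map] using this)
        have hroots : ∀ x ∈ ZB.filter (fun x => Fin.tail x = s),
            x 0 ∈ q.roots.toFinset := by
          intro x hx
          obtain ⟨hxZB, hxs⟩ := Finset.mem_filter.1 hx
          have hxZ : x ∈ Z := (Finset.mem_filter.1 hxZB).1
          have hxP : MvPolynomial.eval x P = 0 := (Finset.mem_filter.1 hxZ).2
          have : Polynomial.eval (x 0) q = 0 := by
            have h3 := eval_eq_eval_mv_eval' (Fin.tail x) (x 0) P
            rw [hcons x, hxP] at h3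
            rw [hq, hp, ← hxs]
            exact h3.symm
          rw [Multiset.mem_toFinset, Polynomial.mem_roots hqne]
          exact this
        have hinj : Set.InjOn (fun x : Fin (t+1) → ℚ => x 0)
            ((ZB.filter (fun x => Fin.tail x = s)) : Set (Fin (t+1) → ℚ)) := by
          intro x hx y hy hxy
          simp only [Finset.coe_filter, Set.mem_setOf_eq] at hx hy
          have hxy' : x 0 = y 0 := hxy
          rw [← hcons x, ← hcons y, hx.2, hy.2, hxy']
        have := Finset.card_le_card_of_injOn (fun x : Fin (t+1) → ℚ => x 0) hroots hinj
        refine le_trans this (le_trans (q.roots.toFinset_card_le) ?_)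
        exact le_trans (Polynomial.card_roots' q) (le_trans Polynomial.natDegree_map_le hkd)
    -- combine
    have hGtcard : Gt.card = S.card ^ t := by simp [hGt]
    have hfinal : Z.card ≤ d * (t+1) * S.card ^ t := by
      rw [← hsplit]
      have h1 : S.card * (d * t * S.card ^ (t - 1)) ≤ d * t * S.card ^ t := by
        cases t with
        | zero => simp
        | succ m =>
          have : S.card * (d * (m+1) * S.card ^ m) = d * (m+1) * S.card ^ (m+1) := by ring
          simp only [Nat.add_sub_cancel]
          omega
      have h2 : ZB.card ≤ d * S.card ^ t := by rw [hGtcard] at hZBcard; exact hZBcard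
      calc ZA.card + ZB.card ≤ d * t * S.card ^ t + d * S.card ^ t := by
            exact Nat.add_le_add (le_trans hZAcard h1) h2
        _ = d * (t+1) * S.card ^ t := by ring
    simpa using hfinal

/-- The evaluation-vector map. -/
noncomputable def vv (t d : ℕ) (q : Fin t → ℤ) : {j // j ∈ mIdx t d} → ℚ :=
  fun j => ∏ l, ((q l : ℚ)) ^ (j.1 l)

lemma span_top (d t : ℕ) (L : ℕ) (Q : Finset (Fin t → ℤ))
    (hQL : Q ⊆ Finset.Icc (1 : Fin t → ℤ) (fun _ => (L : ℤ)))
    (hbig : (d * t * L ^ (t - 1) : ℕ) < Q.card) :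
    Submodule.span ℚ (vv t d '' (Q : Set (Fin t → ℤ))) = ⊤ := by
  classical
  by_contra hne
  obtain ⟨f, hf0, hfmap⟩ := Submodule.exists_dual_map_eq_bot_of_lt_top
    (lt_top_iff_ne_top.2 hne) inferInstance
  set g : {j // j ∈ mIdx t d} → ℚ := fun i => f (fun j => if i = j then 1 else 0) with hg
  have hfx : ∀ x : {j // j ∈ mIdx t d} → ℚ, f x = ∑ i, x i * g i := by
    intro x
    rw [LinearMap.pi_apply_eq_sum_univ f x]
    simp [hg, smul_eq_mul]
  have hgne : ∃ i, g i ≠ 0 := by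
    by_contra hc
    push_neg at hc
    apply hf0
    refine LinearMap.ext fun x => ?_
    rw [hfx]
    simp [hc]
  obtain ⟨i₀, hi₀⟩ := hgne
  set e : {j // j ∈ mIdx t d} → (Fin t →₀ ℕ) := fun j => Finsupp.equivFunOnFinite.symm (j.1) with he
  have heinj : Function.Injective e := by
    intro a b hab
    have := Finsupp.equivFunOnFinite.symm.injective hab
    exact Subtype.ext this
  set P : MvPolynomial (Fin t) ℚ := ∑ j : {j // j ∈ mIdx t d}, monomial (e j) (g j) with hP
  have hPcoeff : ∀ j₀ : {j // j ∈ mIdx t d}, P.coeff (e j₀) = g j₀ := by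
    intro j₀
    rw [hP, MvPolynomial.coeff_sum]
    have : ∀ j : {j // j ∈ mIdx t d},
        MvPolynomial.coeff (e j₀) (monomial (e j) (g j)) = if j = j₀ then g j else 0 := by
      intro j
      rw [MvPolynomial.coeff_monomial]
      congr 1
      simp [heinj.eq_iff]
    rw [Finset.sum_congr rfl (fun j _ => this j)]
    simp
  have hPne : P ≠ 0 := by
    intro h
    apply hi₀
    rw [← hPcoeff i₀, h, coeff_zero]
  have hPdeg : P.totalDegree ≤ d := by
    rw [hP]
    refine le_trans (totalDegree_finset_sum _ _) ?_
    refine Finset.sup_le ?_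
    intro j _
    refine le_trans (totalDegree_monomial_le _ _) ?_
    have hsum : ((e j).sum fun _ => id) = ∑ l, j.1 l := by
      rw [Finsupp.sum_fintype]
      · simp [he]
      · intro l; rfl
    rw [hsum]
    have hj := j.2
    unfold mIdx at hj
    rw [Finset.mem_filter] at hj
    exact hj.2
  have hevalP : ∀ x : Fin t → ℚ,
      MvPolynomial.eval x P = ∑ j : {j // j ∈ mIdx t d}, g j * ∏ l, x l ^ (j.1 l) := by
    intro x
    rw [hP, map_sum]
    refine Finset.sum_congr rfl ?_
    intro j _
    rw [eval_monomial]
    rw [Finsupp.prod_pow]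
    simp [he]
  have hzero : ∀ q ∈ Q, MvPolynomial.eval (fun l => ((q l : ℚ))) P = 0 := by
    intro q hq
    have hv : vv t d q ∈ Submodule.span ℚ (vv t d '' (Q : Set (Fin t → ℤ))) :=
      Submodule.subset_span ⟨q, hq, rfl⟩
    have : f (vv t d q) = 0 := by
      have : f (vv t d q) ∈ Submodule.map f (Submodule.span ℚ (vv t d '' (Q : Set _))) :=
        Submodule.mem_map_of_mem hv
      rw [hfmap] at this
      exact (Submodule.mem_bot (R := ℚ)).1 this
    rw [hevalP]
    rw [hfx] at this
    rw [← this]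
    refine Finset.sum_congr rfl ?_
    intro j _
    rw [mul_comm]
    rfl
  -- counting
  set S : Finset ℚ := (Finset.Icc (1 : ℤ) (L : ℤ)).image (Int.cast : ℤ → ℚ) with hS
  have hScard : S.card = L := by
    rw [hS, Finset.card_image_of_injective _ Int.cast_injective]
    simp
  have hQcard : Q.card ≤ d * t * L ^ (t - 1) := by
    have hmaps : ∀ q ∈ Q, (fun l => ((q l : ℚ))) ∈
        (Fintype.piFinset fun _ : Fin t => S).filter
          (fun x => MvPolynomial.eval x P = 0) := by
      intro q hq
      rw [Finset.mem_filter]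
      constructor
      · rw [Fintype.mem_piFinset]
        intro l
        rw [hS, Finset.mem_image]
        refine ⟨q l, ?_, rfl⟩
        have h := hQL hq
        rw [Finset.mem_Icc] at h
        exact Finset.mem_Icc.2 ⟨h.1 l, h.2 l⟩
      · exact hzero q hq
    have hinj : Set.InjOn (fun (q : Fin t → ℤ) => (fun l => ((q l : ℚ)))) (Q : Set _) := by
      intro a _ b _ hab
      funext l
      exact Int.cast_injective (congrFun hab l)
    have := Finset.card_le_card_of_injOn _ hmaps hinj
    calc Q.card ≤ _ := this
      _ ≤ d * t * S.card ^ (t - 1) := sz d t S P hPne hPdeg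
      _ = d * t * L ^ (t - 1) := by rw [hScard]
  omega

set_option maxHeartbeats 1000000 in
/-- if `𝓠 ⊆ [L]^t` has `|𝓠| ≥ εL^t` and `L > C/ε`, then (with
`s = |𝓘|`) there is a positive integer `Q̃ ≤ CL^C` such that for each `i⃗ ∈ 𝓘` one
can find `q⃗₁,…,q⃗ₛ ∈ 𝓠` and integers `γ₁,…,γₛ` of size at most `CL^C` with
`Σₘ γₘ q⃗ₘ^{j⃗} = Q̃·1_{j⃗=i⃗}` for all `j⃗ ∈ 𝓘`. -/
theorem stmt6 :
    ∀ d t : ℕ, 1 ≤ d → 1 ≤ t →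
      ∃ C : ℝ, 0 < C ∧
        ∀ (ε : ℝ) (L : ℕ) (Q : Finset (Fin t → ℤ)),
          0 < ε → ε ≤ 1 → C / ε < (L : ℝ) →
          Q ⊆ Finset.Icc (1 : Fin t → ℤ) (fun _ => (L : ℤ)) →
          ε * (L : ℝ) ^ t ≤ (Q.card : ℝ) →
          ∃ Qt : ℕ, 1 ≤ Qt ∧ (Qt : ℝ) ≤ C * (L : ℝ) ^ C ∧
            ∀ i ∈ mIdx t d,
              ∃ (q : Fin (mIdx t d).card → (Fin t → ℤ))
                (γ : Fin (mIdx t d).card → ℤ),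
                (∀ m, q m ∈ Q) ∧
                (∀ m, (|γ m| : ℝ) ≤ C * (L : ℝ) ^ C) ∧
                (∀ j ∈ mIdx t d,
                  (∑ m, γ m * ∏ l, (q m l) ^ (j l)) =
                    if j = i then (Qt : ℤ) else 0) := by
  classical
  intro d t hd ht
  set s' := (mIdx t d).card with hs'
  set N : ℕ := Nat.factorial s' + d * s' + d * t + 1 with hN
  have hN1 : (1 : ℕ) ≤ N := by omega
  refine ⟨(N : ℝ), by exact_mod_cast Nat.lt_of_lt_of_le Nat.zero_lt_one hN1, ?_⟩
  intro ε L Q hε hε1 hCL hQL hQcard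
  have hNR1 : (1 : ℝ) ≤ (N : ℝ) := by exact_mod_cast hN1
  have hNL : (N : ℝ) < ε * L := by
    rw [div_lt_iff₀ hε] at hCL
    linarith [hCL]
  have hL1R : (1 : ℝ) < (L : ℝ) := by
    have h1 : ε * (L : ℝ) ≤ (L : ℝ) := by
      have hL0 : (0 : ℝ) ≤ (L : ℝ) := Nat.cast_nonneg L
      nlinarith
    linarith
  have hL1 : 1 ≤ L := by exact_mod_cast hL1R.le
  -- the span is everything
  have hbig : (d * t * L ^ (t - 1) : ℕ) < Q.card := by
    obtain ⟨t', rfl⟩ : ∃ t', t = t' + 1 := ⟨t - 1, by omega⟩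
    have hLt : (0 : ℝ) < (L : ℝ) ^ t' := by positivity
    have h1 : ((d * (t' + 1) * L ^ (t' + 1 - 1) : ℕ) : ℝ) < ε * (L : ℝ) ^ (t' + 1) := by
      push_cast
      have hdtN : ((d : ℝ) * (t' + 1)) < (N : ℝ) := by
        have : d * (t' + 1) + 1 ≤ N := by omega
        exact_mod_cast (by exact_mod_cast Nat.lt_of_lt_of_le (Nat.lt_succ_self _) this :
          (d * (t' + 1) : ℕ) < N)
      have : ((d : ℝ) * (t' + 1)) * (L : ℝ) ^ t' < (ε * L) * (L : ℝ) ^ t' := by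
        apply mul_lt_mul_of_pos_right _ hLt
        linarith
      calc ((d : ℝ) * ((t' : ℝ) + 1) * (L : ℝ) ^ (t' + 1 - 1)) =
            ((d : ℝ) * (t' + 1)) * (L : ℝ) ^ t' := by norm_num
        _ < (ε * L) * (L : ℝ) ^ t' := this
        _ = ε * (L : ℝ) ^ (t' + 1) := by ring
    have h2 : ((d * (t' + 1) * L ^ (t' + 1 - 1) : ℕ) : ℝ) < (Q.card : ℝ) := lt_of_lt_of_le h1 hQcard
    exact_mod_cast h2
  have hspan := span_top d t L Q hQL hbig
  obtain ⟨b, hbV, hspanb, hindep⟩ :=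
    exists_linearIndependent ℚ (vv t d '' (Q : Set (Fin t → ℤ)))
  have hbfin : b.Finite :=
    Set.Finite.subset (((Q : Set (Fin t → ℤ)).toFinite).image _) hbV
  haveI : Fintype b := hbfin.fintype
  let B : Module.Basis b ℚ ({j // j ∈ mIdx t d} → ℚ) :=
    Module.Basis.mk hindep (by rw [Subtype.range_coe, hspanb, hspan])
  have hcard : Fintype.card {j // j ∈ mIdx t d} = Fintype.card b := by
    rw [← Module.finrank_eq_card_basis B, Module.finrank_pi]
  let e : {j // j ∈ mIdx t d} ≃ b := Fintype.equivOfCardEq hcard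
  have hmem : ∀ m : {j // j ∈ mIdx t d}, ∃ qq, qq ∈ Q ∧
      vv t d qq = ((e m : b) : {j // j ∈ mIdx t d} → ℚ) := by
    intro m
    obtain ⟨qq, hqq, hv⟩ := Set.mem_image _ _ _ |>.1 (hbV (e m).2)
    exact ⟨qq, hqq, hv⟩
  choose qt hqtQ hqtv using hmem
  set M : Matrix {j // j ∈ mIdx t d} {j // j ∈ mIdx t d} ℤ :=
    Matrix.of (fun j m => ∏ l, (qt m l) ^ (j.1 l)) with hM
  have hMq : M.map (Int.cast : ℤ → ℚ) =
      (Pi.basisFun ℚ {j // j ∈ mIdx t d}).toMatrix (⇑(B.reindex e.symm)) := by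
    ext j m
    rw [Matrix.map_apply, Module.Basis.toMatrix_apply, Pi.basisFun_repr, Module.Basis.reindex_apply,
      Equiv.symm_symm]
    show ((∏ l, (qt m l) ^ (j.1 l) : ℤ) : ℚ) = B (e m) j
    rw [show B (e m) = ((e m : b) : {j // j ∈ mIdx t d} → ℚ) from Module.Basis.mk_apply _ _ _]
    rw [← hqtv m]
    unfold vv
    push_cast
    rfl
  have hdetq : (M.map (Int.cast : ℤ → ℚ)).det ≠ 0 := by
    rw [hMq]
    letI := (Pi.basisFun ℚ {j // j ∈ mIdx t d}).invertibleToMatrix (B.reindex e.symm)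
    exact (Matrix.isUnit_det_of_invertible _).ne_zero
  have hdet : M.det ≠ 0 := by
    intro h
    apply hdetq
    have := RingHom.map_det (Int.castRingHom ℚ) M
    rw [h] at this
    simpa using this.symm
  -- entry and determinant bounds
  have hLZ1 : (1 : ℤ) ≤ (L : ℤ) := by exact_mod_cast hL1
  have hLd1 : (1 : ℤ) ≤ (L : ℤ) ^ d := by
    calc (1:ℤ) = 1 ^ d := (one_pow d).symm
      _ ≤ (L : ℤ) ^ d := pow_le_pow_left₀ zero_le_one hLZ1 d
  have hentry : ∀ j m : {j // j ∈ mIdx t d}, |M j m| ≤ (L : ℤ) ^ d := by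
    intro j m
    have hq := hQL (hqtQ m)
    rw [Finset.mem_Icc] at hq
    have hq1 : ∀ l, (1 : ℤ) ≤ qt m l := fun l => hq.1 l
    have hq2 : ∀ l, qt m l ≤ (L : ℤ) := fun l => hq.2 l
    show |∏ l, (qt m l) ^ (j.1 l)| ≤ _
    rw [Finset.abs_prod]
    have hsum : ∑ l, j.1 l ≤ d := by
      have hj := j.2
      unfold mIdx at hj
      rw [Finset.mem_filter] at hj
      exact hj.2
    calc ∏ l, |qt m l ^ j.1 l| ≤ ∏ l, (L : ℤ) ^ j.1 l := by
          apply Finset.prod_le_prod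
          · intros; positivity
          · intro l _
            rw [abs_pow, abs_of_nonneg (by linarith [hq1 l] : (0:ℤ) ≤ qt m l)]
            exact pow_le_pow_left₀ (by linarith [hq1 l]) (hq2 l) _
      _ = (L : ℤ) ^ (∑ l, j.1 l) := Finset.prod_pow_eq_pow_sum _ _ _
      _ ≤ (L : ℤ) ^ d := pow_le_pow_right₀ hLZ1 hsum
  have hcardι : Fintype.card {j // j ∈ mIdx t d} = s' := Fintype.card_coe _
  have hdetle : |M.det| ≤ (Nat.factorial s' : ℤ) * ((L : ℤ) ^ d) ^ s' := by
    have := Matrix.det_le (A := M) (abv := (AbsoluteValue.abs : AbsoluteValue ℤ ℤ))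
      (x := (L : ℤ) ^ d) (fun i j => hentry i j)
    simpa [hcardι, nsmul_eq_mul] using this
  have hadjle : ∀ m i0 : {j // j ∈ mIdx t d},
      |M.adjugate m i0| ≤ (Nat.factorial s' : ℤ) * ((L : ℤ) ^ d) ^ s' := by
    intro m i0
    rw [Matrix.adjugate_apply]
    have hup : ∀ a c, |(M.updateRow i0 (Pi.single m 1)) a c| ≤ (L : ℤ) ^ d := by
      intro a c
      rw [Matrix.updateRow_apply]
      split_ifs with h
      · rw [Pi.single_apply]
        split_ifs <;> simpa using hLd1
      · exact hentry a c
    have := Matrix.det_le (A := M.updateRow i0 (Pi.single m 1))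
      (abv := (AbsoluteValue.abs : AbsoluteValue ℤ ℤ)) (x := (L : ℤ) ^ d) hup
    simpa [hcardι, nsmul_eq_mul] using this
  have hkey : ∀ z : ℤ, |z| ≤ (Nat.factorial s' : ℤ) * ((L : ℤ) ^ d) ^ s' →
      ((|z| : ℤ) : ℝ) ≤ (N : ℝ) * (L : ℝ) ^ ((N : ℕ) : ℝ) := by
    intro z hz
    have h1 : ((|z| : ℤ) : ℝ) ≤ (Nat.factorial s' : ℝ) * ((L : ℝ) ^ d) ^ s' := by
      exact_mod_cast hz
    have h3 : (L : ℝ) ^ (d * s') ≤ (L : ℝ) ^ ((N : ℕ) : ℝ) := by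
      rw [← Real.rpow_natCast (L : ℝ) (d * s')]
      refine Real.rpow_le_rpow_of_exponent_le hL1R.le ?_
      exact_mod_cast (by omega : d * s' ≤ N)
    have h4 : (Nat.factorial s' : ℝ) ≤ (N : ℝ) := by
      exact_mod_cast (by omega : Nat.factorial s' ≤ N)
    calc ((|z| : ℤ) : ℝ) ≤ (Nat.factorial s' : ℝ) * ((L : ℝ) ^ d) ^ s' := h1
      _ = (Nat.factorial s' : ℝ) * (L : ℝ) ^ (d * s') := by rw [← pow_mul]
      _ ≤ (N : ℝ) * (L : ℝ) ^ ((N : ℕ) : ℝ) :=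
        mul_le_mul h4 h3 (by positivity) (by positivity)
  refine ⟨M.det.natAbs, Int.natAbs_pos.2 hdet, ?_, ?_⟩
  · have h0 := hkey M.det hdetle
    have heq : ∀ z : ℤ, ((z.natAbs : ℕ) : ℝ) = ((|z| : ℤ) : ℝ) := fun z => by
      simp [Nat.cast_natAbs, Int.cast_abs]
    rw [heq M.det]
    exact h0
  · intro i hi
    set i' : {j // j ∈ mIdx t d} := ⟨i, hi⟩ with hi'
    set sgn : ℤ := if 0 ≤ M.det then 1 else -1 with hsgn
    have hsgndet : sgn * M.det = (M.det.natAbs : ℤ) := by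
      rw [← Int.abs_eq_natAbs, hsgn]
      split_ifs with h
      · rw [one_mul, abs_of_nonneg h]
      · rw [neg_one_mul, abs_of_neg (lt_of_not_ge h)]
    have hsgnabs : |sgn| = 1 := by
      rw [hsgn]; split_ifs <;> simp
    set e2 : Fin s' ≃ {j // j ∈ mIdx t d} := (mIdx t d).equivFin.symm with he2
    refine ⟨fun m => qt (e2 m), fun m => sgn * M.adjugate (e2 m) i',
      fun m => hqtQ (e2 m), ?_, ?_⟩
    · intro m
      have habs : |sgn * M.adjugate (e2 m) i'| = |M.adjugate (e2 m) i'| := by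
        rw [abs_mul, hsgnabs, one_mul]
      show |((sgn * M.adjugate (e2 m) i' : ℤ) : ℝ)| ≤ _
      rw [← Int.cast_abs, habs]
      exact hkey _ (hadjle _ _)
    · intro j hj
      set j' : {j // j ∈ mIdx t d} := ⟨j, hj⟩ with hj'
      have hstep1 : (∑ m : Fin s', (sgn * M.adjugate (e2 m) i') * ∏ l, (qt (e2 m) l) ^ (j l))
          = ∑ m' : {j // j ∈ mIdx t d}, (sgn * M.adjugate m' i') * M j' m' :=
        Fintype.sum_equiv e2 _ _ (fun m => rfl)
      have hstep2 : (∑ m' : {j // j ∈ mIdx t d}, (sgn * M.adjugate m' i') * M j' m')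
          = sgn * ((M * M.adjugate) j' i') := by
        rw [Matrix.mul_apply, Finset.mul_sum]
        exact Finset.sum_congr rfl (fun m' _ => by ring)
      have hstep3 : sgn * ((M * M.adjugate) j' i')
          = if j = i then (M.det.natAbs : ℤ) else 0 := by
        rw [Matrix.mul_adjugate, Matrix.smul_apply, Matrix.one_apply]
        have hji : (j' = i') ↔ (j = i) := by
          rw [hj', hi', Subtype.mk.injEq]
        by_cases h : j = i
        · rw [if_pos (hji.2 h), if_pos h, smul_eq_mul, mul_one, hsgndet]
        · rw [if_neg (fun hh => h (hji.1 hh)), if_neg h, smul_eq_mul, mul_zero, mul_zero]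
      rw [hstep1.trans (hstep2.trans hstep3)]
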